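/- Let m be a positive integer and let 0 < r₁ < r₂ < ... < r_s ≤ m be integers. Then there exists at most one pair of sets (C, D) of nonnegative integers satisfying: C ∪ D = [0, m], 0 ∈ C, C ∩ D = {r₁, ..., r_s}, and R_C(k) = R_D(k) for every positive integer k ≤ m. That is, if (C₁, D₁) and (C₂, D₂) both satisfy these conditions, then C₁ = C₂ and D₁ = D₂. -/
import Mathlib


/-- `R S n` is the number of unordered representations of `n` as `s + s'`
with `s, s' ∈ S` and `s < s'`. -/
noncomputable def R (S : Set ℕ) (n : ℕ) : ℕ :=
  {p : ℕ × ℕ | p.1 ∈ S ∧ p.2 ∈ S ∧ p.1 < p.2 ∧ p.1 + p.2 = n}.ncard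

/-- The Thue–Morse set: nonnegative integers with an even number of
`1` digits in binary. -/
def A : Set ℕ := {n | Even ((Nat.digits 2 n).sum)}

/-- The complement of the Thue–Morse set. -/
def B : Set ℕ := Aᶜ

/-- Representations with both parts strictly below `n`. -/
noncomputable def R' (S : Set ℕ) (n : ℕ) : ℕ :=
  {p : ℕ × ℕ | p.1 ∈ S ∧ p.2 ∈ S ∧ p.1 < p.2 ∧ p.2 < n ∧ p.1 + p.2 = n}.ncard

lemma finite_aux (S : Set ℕ) (n : ℕ) :
    {p : ℕ × ℕ | p.1 ∈ S ∧ p.2 ∈ S ∧ p.1 < p.2 ∧ p.2 < n ∧ p.1 + p.2 = n}.Finite := by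
  apply Set.Finite.subset ((Set.finite_Iic n).prod (Set.finite_Iic n))
  rintro ⟨a, b⟩ ⟨_, _, _, _, h⟩
  exact ⟨by simp only [Set.mem_Iic]; omega, by simp only [Set.mem_Iic]; omega⟩

open Classical in
lemma R_split (S : Set ℕ) (n : ℕ) (hn : 0 < n) :
    R S n = R' S n + (if 0 ∈ S ∧ n ∈ S then 1 else 0) := by
  by_cases h : 0 ∈ S ∧ n ∈ S
  · have hE : {p : ℕ × ℕ | p.1 ∈ S ∧ p.2 ∈ S ∧ p.1 < p.2 ∧ p.1 + p.2 = n}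
        = insert ((0 : ℕ), n)
          {p : ℕ × ℕ | p.1 ∈ S ∧ p.2 ∈ S ∧ p.1 < p.2 ∧ p.2 < n ∧ p.1 + p.2 = n} := by
      ext ⟨a, b⟩
      simp only [Set.mem_setOf_eq, Set.mem_insert_iff, Prod.mk.injEq]
      constructor
      · rintro ⟨ha, hb, hab, habn⟩
        rcases lt_or_eq_of_le (show b ≤ n by omega) with hb' | hb'
        · exact Or.inr ⟨ha, hb, hab, hb', habn⟩
        · left; omega
      · rintro (⟨rfl, rfl⟩ | ⟨ha, hb, hab, _, habn⟩)
        · exact ⟨h.1, h.2, hn, by omega⟩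
        · exact ⟨ha, hb, hab, habn⟩
    rw [R, hE, Set.ncard_insert_of_notMem (by simp) (finite_aux S n), if_pos h, R']
  · have hE : {p : ℕ × ℕ | p.1 ∈ S ∧ p.2 ∈ S ∧ p.1 < p.2 ∧ p.1 + p.2 = n}
        = {p : ℕ × ℕ | p.1 ∈ S ∧ p.2 ∈ S ∧ p.1 < p.2 ∧ p.2 < n ∧ p.1 + p.2 = n} := by
      ext ⟨a, b⟩
      simp only [Set.mem_setOf_eq]
      constructor
      · rintro ⟨ha, hb, hab, habn⟩
        rcases lt_or_eq_of_le (show b ≤ n by omega) with hb' | hb'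
        · exact ⟨ha, hb, hab, hb', habn⟩
        · have ha0 : a = 0 := by omega
          exact absurd ⟨ha0 ▸ ha, hb' ▸ hb⟩ h
      · rintro ⟨ha, hb, hab, _, habn⟩
        exact ⟨ha, hb, hab, habn⟩
    rw [R, hE, if_neg h, R']
    omega

lemma R'_congr {S T : Set ℕ} (n : ℕ) (h : ∀ k < n, (k ∈ S ↔ k ∈ T)) :
    R' S n = R' T n := by
  unfold R'
  congr 1
  ext ⟨a, b⟩
  simp only [Set.mem_setOf_eq]
  constructor
  · rintro ⟨ha, hb, hab, hbn, habn⟩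
    exact ⟨(h a (by omega)).mp ha, (h b hbn).mp hb, hab, hbn, habn⟩
  · rintro ⟨ha, hb, hab, hbn, habn⟩
    exact ⟨(h a (by omega)).mpr ha, (h b hbn).mpr hb, hab, hbn, habn⟩

theorem uniqueness_of_partition (m : ℕ) (hm : 0 < m)
    (s : ℕ) (r : Fin s → ℕ) (hmono : StrictMono r)
    (hrpos : ∀ i, 0 < r i) (hrle : ∀ i, r i ≤ m)
    (C₁ D₁ C₂ D₂ : Set ℕ)
    (hU₁ : C₁ ∪ D₁ = Set.Iic m) (h0₁ : (0 : ℕ) ∈ C₁)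
    (hI₁ : C₁ ∩ D₁ = Set.range r)
    (hR₁ : ∀ k : ℕ, 0 < k → k ≤ m → R C₁ k = R D₁ k)
    (hU₂ : C₂ ∪ D₂ = Set.Iic m) (h0₂ : (0 : ℕ) ∈ C₂)
    (hI₂ : C₂ ∩ D₂ = Set.range r)
    (hR₂ : ∀ k : ℕ, 0 < k → k ≤ m → R C₂ k = R D₂ k) :
    C₁ = C₂ ∧ D₁ = D₂ := by
  classical
  -- 0 is not in D₁ or D₂
  have h0r : (0 : ℕ) ∉ Set.range r := by
    rintro ⟨i, hi⟩; have := hrpos i; omega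
  have h0D₁ : (0 : ℕ) ∉ D₁ := fun h => by
    have : (0 : ℕ) ∈ C₁ ∩ D₁ := ⟨h0₁, h⟩
    rw [hI₁] at this; exact h0r this
  have h0D₂ : (0 : ℕ) ∉ D₂ := fun h => by
    have : (0 : ℕ) ∈ C₂ ∩ D₂ := ⟨h0₂, h⟩
    rw [hI₂] at this; exact h0r this
  -- membership in D determined by membership in C (for k ≤ m)
  have hD : ∀ (C D : Set ℕ), C ∪ D = Set.Iic m → C ∩ D = Set.range r →
      ∀ k, k ≤ m → (k ∈ D ↔ (k ∈ Set.range r ∨ k ∉ C)) := by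
    intro C D hU hI k hk
    constructor
    · intro hkD
      by_cases hkC : k ∈ C
      · left; rw [← hI]; exact ⟨hkC, hkD⟩
      · right; exact hkC
    · rintro (hr | hnc)
      · rw [← hI] at hr; exact hr.2
      · have hmem : k ∈ C ∪ D := by rw [hU]; exact hk
        rcases hmem with h | h
        · exact absurd h hnc
        · exact h
  -- nothing above m
  have hbig : ∀ (C D : Set ℕ), C ∪ D = Set.Iic m →
      ∀ k, m < k → k ∉ C ∧ k ∉ D := by
    intro C D hU k hk
    constructor <;> intro h
    · have : k ∈ C ∪ D := Or.inl h
      rw [hU] at this; exact absurd this (by simpa using hk.not_ge)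
    · have : k ∈ C ∪ D := Or.inr h
      rw [hU] at this; exact absurd this (by simpa using hk.not_ge)
  -- key: C₁ and C₂ agree everywhere
  have key : ∀ n : ℕ, (n ∈ C₁ ↔ n ∈ C₂) := by
    intro n
    induction n using Nat.strong_induction_on with
    | _ n ih =>
      by_cases hnm : n ≤ m
      · rcases Nat.eq_zero_or_pos n with rfl | hn
        · simp [h0₁, h0₂]
        · have hDlt : ∀ k < n, (k ∈ D₁ ↔ k ∈ D₂) := by
            intro k hk
            rw [hD C₁ D₁ hU₁ hI₁ k (by omega), hD C₂ D₂ hU₂ hI₂ k (by omega)]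
            have := ih k hk
            tauto
          have ha : R' C₁ n = R' C₂ n := R'_congr n ih
          have hb : R' D₁ n = R' D₂ n := R'_congr n hDlt
          have e₁ : R' C₁ n + (if n ∈ C₁ then 1 else 0) = R' D₁ n := by
            have h := hR₁ n hn hnm
            rw [R_split _ _ hn, R_split _ _ hn] at h
            simpa [h0₁, h0D₁] using h
          have e₂ : R' C₂ n + (if n ∈ C₂ then 1 else 0) = R' D₂ n := by
            have h := hR₂ n hn hnm
            rw [R_split _ _ hn, R_split _ _ hn] at h
            simpa [h0₂, h0D₂] using h
          by_cases h1 : n ∈ C₁ <;> by_cases h2 : n ∈ C₂ <;>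
            simp [h1, h2] at e₁ e₂ ⊢ <;> omega
      · have h1 := hbig C₁ D₁ hU₁ n (by omega)
        have h2 := hbig C₂ D₂ hU₂ n (by omega)
        tauto
  constructor
  · ext n; exact key n
  · ext n
    by_cases hnm : n ≤ m
    · rw [hD C₁ D₁ hU₁ hI₁ n hnm, hD C₂ D₂ hU₂ hI₂ n hnm]
      have := key n
      tauto
    · have h1 := hbig C₁ D₁ hU₁ n (by omega)
      have h2 := hbig C₂ D₂ hU₂ n (by omega)
      tauto
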